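/- arXiv:1005.4313 — 4 statements merged into one kernel-verified Lean document; each statement's English description precedes it below -/
import Mathlib

section
/- Let $t_1,\dots,t_m$ be indeterminates and let $M'$ be the $(m+2)\times(m+2)$ matrix whose $j$-th row (for $j\in[0,m+1]$) is $(1, (-1)^j, t_1^j+t_1^{-j}, t_2^j+t_2^{-j}, \dots, t_m^j+t_m^{-j})$. Then $\det(M')$ equals, up to sign and up to multiplication by a monomial in the $t_i$, the product $2\prod_i(t_i-t_i^{-1})\cdot\prod_{i<j}(t_i-t_j)\cdot\prod_{i\le j}(t_i-t_j^{-1})$. -/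
open MvPolynomial

/-- The indeterminates `t₁,…,t_m`, viewed in the fraction field of `ℤ[t₁,…,t_m]`. -/
noncomputable def tvar (m : ℕ) (i : Fin m) : FractionRing (MvPolynomial (Fin m) ℤ) :=
  algebraMap (MvPolynomial (Fin m) ℤ) _ (X i)

/-- The `(m+2) × (m+2)` matrix `M'` of 1.1(b): its row indexed by `j ∈ [0, m+1]` is
`(1, (-1)^j, t₁ʲ + t₁⁻ʲ, …, t_mʲ + t_m⁻ʲ)`. -/
noncomputable def Mprime (m : ℕ) : Matrix (Fin (m + 2)) (Fin (m + 2))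
    (FractionRing (MvPolynomial (Fin m) ℤ)) :=
  Matrix.of fun j i =>
    if h : 2 ≤ (i : ℕ) then
      tvar m ⟨(i : ℕ) - 2, by have := i.isLt; omega⟩ ^ ((j : ℕ) : ℤ) +
        tvar m ⟨(i : ℕ) - 2, by have := i.isLt; omega⟩ ^ (-((j : ℕ) : ℤ))
    else if (i : ℕ) = 0 then 1 else (-1) ^ (j : ℕ)

open Matrix

set_option synthInstance.maxHeartbeats 1000000
set_option maxHeartbeats 1000000

lemma tvar_ne_zero (m : ℕ) (i : Fin m) : tvar m i ≠ 0 := by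
  simp only [tvar, ne_eq, IsFractionRing.to_map_eq_zero_iff]
  exact X_ne_zero i

noncomputable def yv (m : ℕ) : Fin (m + 2) → FractionRing (MvPolynomial (Fin m) ℤ) :=
  fun k => if h : 2 ≤ (k : ℕ) then
      tvar m ⟨(k : ℕ) - 2, by have := k.isLt; omega⟩ +
        (tvar m ⟨(k : ℕ) - 2, by have := k.isLt; omega⟩)⁻¹
    else if (k : ℕ) = 0 then 2 else -2

lemma dickson_deg_coeff (R : Type*) [CommRing R] :
    ∀ n : ℕ, (Polynomial.dickson 1 (1:R) n).natDegree ≤ n ∧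
      (Polynomial.dickson 1 (1:R) n).coeff n = if n = 0 then 2 else 1
  | 0 => by
    have h : Polynomial.dickson 1 (1:R) 0 = 2 := by
      rw [Polynomial.dickson_zero]; norm_num
    rw [h]; simp
  | 1 => by
    rw [Polynomial.dickson_one]
    simp [Polynomial.natDegree_X_le]
  | n + 2 => by
    obtain ⟨h1, h2⟩ := dickson_deg_coeff R (n+1)
    obtain ⟨h3, _⟩ := dickson_deg_coeff R n
    rw [Polynomial.dickson_add_two]
    constructor
    · refine (Polynomial.natDegree_sub_le _ _).trans (max_le ?_ ?_)
      · refine Polynomial.natDegree_mul_le.trans ?_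
        have hx := Polynomial.natDegree_X_le (R := R)
        omega
      · simp only [_root_.map_one, one_mul]; omega
    · rw [Polynomial.coeff_sub, show n + 2 = (n+1) + 1 from rfl, Polynomial.coeff_X_mul, h2,
        _root_.map_one, one_mul,
        Polynomial.coeff_eq_zero_of_natDegree_lt (lt_of_le_of_lt h3 (by omega))]
      simp

noncomputable def Cmat (m : ℕ) : Matrix (Fin (m + 2)) (Fin (m + 2))
    (FractionRing (MvPolynomial (Fin m) ℤ)) :=
  Matrix.of fun j l =>
    (Polynomial.dickson 1 (1 : FractionRing (MvPolynomial (Fin m) ℤ)) (j : ℕ)).coeff (l : ℕ)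

noncomputable def Dmat (m : ℕ) : Matrix (Fin (m + 2)) (Fin (m + 2))
    (FractionRing (MvPolynomial (Fin m) ℤ)) :=
  Matrix.diagonal (fun k => if (k : ℕ) < 2 then (2 : FractionRing (MvPolynomial (Fin m) ℤ))⁻¹ else 1)

lemma Mprime_eq (m : ℕ) :
    Mprime m = Cmat m * (Matrix.vandermonde (yv m))ᵀ * Dmat m := by
  ext j k
  rw [Dmat, Matrix.mul_diagonal]
  have hsum : (Cmat m * (Matrix.vandermonde (yv m))ᵀ) j k
      = (Polynomial.dickson 1 (1 : FractionRing (MvPolynomial (Fin m) ℤ)) (j : ℕ)).eval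
        (yv m k) := by
    rw [Matrix.mul_apply]
    rw [Polynomial.eval_eq_sum_range'
      (lt_of_le_of_lt (dickson_deg_coeff (FractionRing (MvPolynomial (Fin m) ℤ)) (j : ℕ)).1 j.isLt) (yv m k)]
    rw [← Fin.sum_univ_eq_sum_range]
    rfl
  rw [hsum]
  rcases lt_or_ge (k : ℕ) 2 with hk | hk
  · rcases (by omega : (k:ℕ) = 0 ∨ (k:ℕ) = 1) with hk0 | hk1
    · have hy : yv m k = 1 + 1 := by simp [yv, hk0]; norm_num
      rw [hy, Polynomial.dickson_one_one_eval_add_inv 1 1 (by norm_num)]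
      simp [Mprime, hk0]
      norm_num
      exact fun h => absurd (Fin.ext (by simpa using hk0)) h
    · have hy : yv m k = -1 + -1 := by simp [yv, hk1]; norm_num
      rw [hy, Polynomial.dickson_one_one_eval_add_inv (-1) (-1) (by norm_num)]
      simp [Mprime, hk1]
      have h2 : (2 : FractionRing (MvPolynomial (Fin m) ℤ)) ≠ 0 := two_ne_zero
      field_simp
      rw [if_neg (fun h => by simp [h] at hk1)]
      ring
  · set t := tvar m ⟨(k : ℕ) - 2, by have := k.isLt; omega⟩ with ht
    have hy : yv m k = t + t⁻¹ := by rw [yv, dif_pos hk]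
    have htne : t ≠ 0 := tvar_ne_zero _ _
    rw [hy, Polynomial.dickson_one_one_eval_add_inv t t⁻¹ (mul_inv_cancel₀ htne)]
    rw [Mprime]
    simp only [Matrix.of_apply, dif_pos hk, if_neg (by omega : ¬ (k:ℕ) < 2), mul_one, ← ht]
    rw [zpow_natCast, _root_.zpow_neg, zpow_natCast, inv_pow]

lemma det_Cmat (m : ℕ) : (Cmat m).det = 2 := by
  rw [Matrix.det_of_lowerTriangular (Cmat m) ?_]
  · have : ∀ i : Fin (m+2), Cmat m i i = if (i:ℕ) = 0 then 2 else 1 := fun i =>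
      (dickson_deg_coeff (FractionRing (MvPolynomial (Fin m) ℤ)) (i:ℕ)).2
    rw [Finset.prod_congr rfl (fun i _ => this i)]
    rw [Fin.prod_univ_succ]
    simp
  · intro i j hij
    have hij' : (i : ℕ) < (j : ℕ) := hij
    exact Polynomial.coeff_eq_zero_of_natDegree_lt
      (lt_of_le_of_lt (dickson_deg_coeff _ (i:ℕ)).1 hij')

lemma det_Dmat (m : ℕ) :
    (Dmat m).det = (2 : FractionRing (MvPolynomial (Fin m) ℤ))⁻¹ * 2⁻¹ := by
  rw [Dmat, Matrix.det_diagonal, Fin.prod_univ_succ, Fin.prod_univ_succ]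
  simp only [Fin.val_zero, Fin.val_succ, Fin.coe_eq_castSucc]
  norm_num

lemma yv_zero (m : ℕ) : yv m 0 = 2 := by simp [yv]

lemma yv_one (m : ℕ) : yv m 1 = -2 := by simp [yv]

lemma yv_ss (m : ℕ) (j : Fin m) : yv m j.succ.succ = tvar m j + (tvar m j)⁻¹ := by
  simp [yv, Fin.val_succ]


/-- Lusztig, 1.1(b): `det M'` equals
`± 2 ∏ᵢ (tᵢ - tᵢ⁻¹) · ∏_{i<j} (tᵢ - tⱼ) · ∏_{i≤j} (tᵢ - tⱼ⁻¹)` times a Laurent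
monomial in the `tᵢ`. -/
theorem stmt1 (m : ℕ) :
    ∃ (e : ℤ) (a : Fin m → ℤ), (e = 1 ∨ e = -1) ∧
      (Mprime m).det
      = (e : FractionRing (MvPolynomial (Fin m) ℤ)) * (∏ i, tvar m i ^ a i) *
        (2 * (∏ i, (tvar m i - (tvar m i)⁻¹)) *
         (∏ i, ∏ j ∈ Finset.univ.filter (fun j => i < j), (tvar m i - tvar m j)) *
         (∏ i, ∏ j ∈ Finset.univ.filter (fun j => i ≤ j), (tvar m i - (tvar m j)⁻¹))) := by
  classical
  refine ⟨(-1) ^ (∑ i : Fin m, (Finset.Ioi i).card + 1),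
    fun i => -((Finset.Ioi i).card : ℤ), ?_, ?_⟩
  · rcases Nat.even_or_odd (∑ i : Fin m, (Finset.Ioi i).card + 1) with h | h
    · left; exact h.neg_one_pow
    · right; exact h.neg_one_pow
  have htne : ∀ i, tvar m i ≠ 0 := fun i => tvar_ne_zero m i
  have hdet : (Mprime m).det
      = 2 * (∏ i : Fin (m+2), ∏ j ∈ Finset.Ioi i, (yv m j - yv m i)) * (2⁻¹ * 2⁻¹) := by
    rw [Mprime_eq, Matrix.det_mul, Matrix.det_mul, Matrix.det_transpose,
      Matrix.det_vandermonde, det_Cmat, det_Dmat]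
  have hsplit : (∏ i : Fin (m+2), ∏ j ∈ Finset.Ioi i, (yv m j - yv m i))
      = (yv m 1 - yv m 0) *
        (((∏ j : Fin m, (yv m j.succ.succ - yv m 0))
            * (∏ j : Fin m, (yv m j.succ.succ - yv m 1)))
          * (∏ i : Fin m, ∏ j ∈ Finset.Ioi i, (yv m j.succ.succ - yv m i.succ.succ))) := by
    rw [Fin.prod_univ_succ, Fin.prod_univ_succ]
    simp only [Fin.prod_Ioi_zero, Fin.prod_Ioi_succ, Fin.prod_univ_succ]
    simp only [Fin.succ_zero_eq_one]
    try ring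
  have hA : ∀ j : Fin m, (yv m j.succ.succ - yv m 0) * (yv m j.succ.succ - yv m 1)
      = (tvar m j - (tvar m j)⁻¹) ^ 2 := by
    intro j
    have h2 : tvar m j * (tvar m j)⁻¹ = 1 := mul_inv_cancel₀ (htne j)
    rw [yv_ss, yv_zero, yv_one]
    linear_combination (4 : FractionRing (MvPolynomial (Fin m) ℤ)) * h2
  have hB : ∀ i j : Fin m, (yv m j.succ.succ - yv m i.succ.succ)
      = -(tvar m i)⁻¹ * ((tvar m i - tvar m j) * (tvar m i - (tvar m j)⁻¹)) := by
    intro i j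
    have h1 : tvar m i * (tvar m i)⁻¹ = 1 := mul_inv_cancel₀ (htne i)
    have h2 : tvar m j * (tvar m j)⁻¹ = 1 := mul_inv_cancel₀ (htne j)
    rw [yv_ss, yv_ss]
    linear_combination (tvar m i - tvar m j - (tvar m j)⁻¹) * h1 + (tvar m i)⁻¹ * h2
  have hprod1 : ((∏ j : Fin m, (yv m j.succ.succ - yv m 0))
      * (∏ j : Fin m, (yv m j.succ.succ - yv m 1)))
      = (∏ i, (tvar m i - (tvar m i)⁻¹)) ^ 2 := by
    rw [← Finset.prod_mul_distrib, ← Finset.prod_pow]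
    exact Finset.prod_congr rfl fun j _ => hA j
  have hprod2 : (∏ i : Fin m, ∏ j ∈ Finset.Ioi i, (yv m j.succ.succ - yv m i.succ.succ))
      = ((-1 : FractionRing (MvPolynomial (Fin m) ℤ)) ^ (∑ i : Fin m, (Finset.Ioi i).card)
          * ∏ i, ((tvar m i)⁻¹) ^ (Finset.Ioi i).card)
        * ((∏ i, ∏ j ∈ Finset.Ioi i, (tvar m i - tvar m j))
          * (∏ i, ∏ j ∈ Finset.Ioi i, (tvar m i - (tvar m j)⁻¹))) := by
    have step : ∀ i : Fin m, (∏ j ∈ Finset.Ioi i, (yv m j.succ.succ - yv m i.succ.succ))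
        = ((-1 : FractionRing (MvPolynomial (Fin m) ℤ)) ^ ((Finset.Ioi i).card)
            * ((tvar m i)⁻¹) ^ ((Finset.Ioi i).card))
          * ((∏ j ∈ Finset.Ioi i, (tvar m i - tvar m j))
            * (∏ j ∈ Finset.Ioi i, (tvar m i - (tvar m j)⁻¹))) := by
      intro i
      rw [Finset.prod_congr rfl (fun j _ => hB i j), Finset.prod_mul_distrib,
        Finset.prod_mul_distrib, Finset.prod_const,
        show -(tvar m i)⁻¹ = (-1) * (tvar m i)⁻¹ by ring, mul_pow]
    rw [Finset.prod_congr rfl (fun i _ => step i)]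
    simp only [Finset.prod_mul_distrib, Finset.prod_pow_eq_pow_sum]
  have hfLt : ∀ i : Fin m, Finset.univ.filter (fun j => i < j) = Finset.Ioi i := by
    intro i; ext j; simp
  have hfLe : ∀ i : Fin m, Finset.univ.filter (fun j => i ≤ j) = Finset.Ici i := by
    intro i; ext j; simp
  have hIci : ∀ i : Fin m, (∏ j ∈ Finset.Ici i, (tvar m i - (tvar m j)⁻¹))
      = (tvar m i - (tvar m i)⁻¹) * ∏ j ∈ Finset.Ioi i, (tvar m i - (tvar m j)⁻¹) := by
    intro i
    rw [← Finset.Ioi_insert, Finset.prod_insert (Finset.notMem_Ioi_self)]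
  have hzpow : ∀ i : Fin m, tvar m i ^ (-((Finset.Ioi i).card : ℤ))
      = ((tvar m i)⁻¹) ^ ((Finset.Ioi i).card) := by
    intro i
    rw [_root_.zpow_neg, zpow_natCast, inv_pow]
  rw [hdet, hsplit, hprod1, hprod2, yv_zero, yv_one]
  simp only [hfLt, hfLe]
  rw [Finset.prod_congr rfl (fun (i : Fin m) _ => hIci i), Finset.prod_mul_distrib]
  rw [Finset.prod_congr rfl (fun (i : Fin m) _ => hzpow i)]
  push_cast
  rw [pow_succ]
  have h2 : (2 : FractionRing (MvPolynomial (Fin m) ℤ)) ≠ 0 := two_ne_zero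
  field_simp
  ring
end

section
/- Let $k$ be a field and $\lambda_1,\dots,\lambda_m \in k^*$ be such that $\lambda_i \ne \lambda_j$ for $i\ne j$ and $\lambda_i \ne \lambda_j^{-1}$ for all $i,j$. Then the $m\times m$ matrix with entries $\lambda_i^j - \lambda_i^{-j}$ ($j\in[1,m]$, $i\in[1,m]$) is invertible. In particular, for any $c \in k^m$ the linear system $\sum_{i=1}^m (\lambda_i^j - \lambda_i^{-j}) x_i = c_j$ ($j\in[1,m]$) has a unique solution $x \in k^m$. -/
open Polynomial Matrix

private lemma dickson_aux {R : Type*} [CommRing R] (x y : R) (h : x * y = 1) :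
    ∀ n : ℕ, (x - y) * (Polynomial.dickson 2 1 n).eval (x + y) = x ^ (n+1) - y ^ (n+1)
  | 0 => by
      rw [Polynomial.dickson_zero]
      norm_num
  | 1 => by
      rw [Polynomial.dickson_one]
      simp only [Polynomial.eval_X]
      ring
  | (n+2) => by
      have h1 := dickson_aux x y h n
      have h2 := dickson_aux x y h (n+1)
      rw [Polynomial.dickson_add_two]
      simp only [Polynomial.eval_sub, Polynomial.eval_mul, Polynomial.eval_X,
        Polynomial.eval_C, _root_.map_one, one_mul]
      linear_combination (x + y) * h2 - h1 + (x ^ (n+1) - y ^ (n+1)) * h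

private lemma dickson_monic {R : Type*} [CommRing R] [Nontrivial R] :
    ∀ n : ℕ, (Polynomial.dickson 2 1 n : R[X]).Monic ∧
      (Polynomial.dickson 2 1 n : R[X]).natDegree = n
  | 0 => by
      rw [Polynomial.dickson_zero]
      norm_num
  | 1 => by
      rw [Polynomial.dickson_one]
      exact ⟨Polynomial.monic_X, Polynomial.natDegree_X⟩
  | (n+2) => by
      obtain ⟨hm1, hd1⟩ := dickson_monic (R := R) n
      obtain ⟨hm2, hd2⟩ := dickson_monic (R := R) (n+1)
      rw [Polynomial.dickson_add_two, _root_.map_one, one_mul]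
      have hmul : (X * Polynomial.dickson 2 1 (n+1) : R[X]).Monic :=
        Polynomial.monic_X.mul hm2
      have hdmul : (X * Polynomial.dickson 2 1 (n+1) : R[X]).natDegree = n + 2 := by
        rw [Polynomial.monic_X.natDegree_mul hm2, Polynomial.natDegree_X, hd2]; omega
      have hlt : (Polynomial.dickson 2 1 n : R[X]).degree <
          (X * Polynomial.dickson 2 1 (n+1) : R[X]).degree := by
        rw [Polynomial.degree_eq_natDegree hmul.ne_zero, hdmul]
        refine lt_of_le_of_lt Polynomial.degree_le_natDegree ?_
        rw [hd1]
        exact_mod_cast (by omega : n < n + 2)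
      refine ⟨hmul.sub_of_left hlt, ?_⟩
      rw [Polynomial.natDegree_sub_eq_left_of_natDegree_lt, hdmul]
      rw [hdmul, hd1]; omega

/-- if `λ₁,…,λ_m ∈ k*` satisfy `λᵢ ≠ λⱼ` for `i ≠ j` and
`λᵢ ≠ λⱼ⁻¹` for all `i,j`, then the matrix `(λᵢʲ - λᵢ⁻ʲ)_{j,i∈[1,m]}` is invertible;
in particular every linear system `∑ᵢ (λᵢʲ - λᵢ⁻ʲ) xᵢ = cⱼ` has a unique solution. -/
theorem stmt2 {k : Type*} [Field k] (m : ℕ) (l : Fin m → k)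
    (hl0 : ∀ i, l i ≠ 0)
    (hne : ∀ i j, i ≠ j → l i ≠ l j)
    (hinv : ∀ i j, l i ≠ (l j)⁻¹) :
    IsUnit (Matrix.of fun j i : Fin m =>
      l i ^ (((j : ℕ) : ℤ) + 1) - l i ^ (-(((j : ℕ) : ℤ) + 1))) ∧
    ∀ c : Fin m → k, ∃! x : Fin m → k,
      (Matrix.of fun j i : Fin m =>
        l i ^ (((j : ℕ) : ℤ) + 1) - l i ^ (-(((j : ℕ) : ℤ) + 1))).mulVec x = c := by
  set M : Matrix (Fin m) (Fin m) k := Matrix.of fun j i : Fin m =>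
      l i ^ (((j : ℕ) : ℤ) + 1) - l i ^ (-(((j : ℕ) : ℤ) + 1)) with hM
  -- rewrite entries using natural powers of l i and (l i)⁻¹
  have hentry : ∀ j i : Fin m, M j i = l i ^ ((j : ℕ) + 1) - (l i)⁻¹ ^ ((j : ℕ) + 1) := by
    intro j i
    have : (((j : ℕ) : ℤ) + 1) = (((j : ℕ) + 1 : ℕ) : ℤ) := by push_cast; ring
    rw [hM]
    simp only [Matrix.of_apply, this, _root_.zpow_neg, zpow_natCast, inv_pow]
  have hd : ∀ i, l i - (l i)⁻¹ ≠ 0 := by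
    intro i hcontra
    exact hinv i i (by rwa [sub_eq_zero] at hcontra)
  have hmu : Function.Injective (fun i => l i + (l i)⁻¹) := by
    intro i j hij
    by_contra hij'
    simp only at hij
    have h1 : (l i - l j) * (l i * l j - 1) = 0 := by
      have h2 : (l i + (l i)⁻¹) * (l i * l j) = (l j + (l j)⁻¹) * (l i * l j) := by
        rw [hij]
      have hi := mul_inv_cancel₀ (hl0 i)
      have hj := mul_inv_cancel₀ (hl0 j)
      linear_combination h2 - l j * hi + l i * hj
    rcases mul_eq_zero.mp h1 with h | h
    · exact hne i j hij' (by rwa [sub_eq_zero] at h)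
    · have : l i * l j = 1 := by rwa [sub_eq_zero] at h
      exact hinv i j (eq_inv_of_mul_eq_one_left (mul_comm (l i) (l j) ▸ this))
  -- factor M = Nᵀ * diagonal d
  set d : Fin m → k := fun i => l i - (l i)⁻¹ with hdd
  set μ : Fin m → k := fun i => l i + (l i)⁻¹ with hmm
  set N : Matrix (Fin m) (Fin m) k :=
    Matrix.of (fun i j : Fin m => (Polynomial.dickson 2 1 (j : ℕ)).eval (μ i)) with hN
  have hfact : M = Nᵀ * Matrix.diagonal d := by
    ext j i
    rw [Matrix.mul_diagonal, hentry]
    simp only [hN, Matrix.transpose_apply, Matrix.of_apply, hdd, hmm]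
    rw [mul_comm]
    exact (dickson_aux (l i) (l i)⁻¹ (mul_inv_cancel₀ (hl0 i)) (j : ℕ)).symm
  have hdetN : N.det ≠ 0 := by
    have := Matrix.det_eval_matrixOfPolynomials_eq_det_vandermonde μ
      (fun j : Fin m => Polynomial.dickson 2 1 (j : ℕ))
      (fun j => (dickson_monic (R := k) (j : ℕ)).2)
      (fun j => (dickson_monic (R := k) (j : ℕ)).1)
    rw [hN, ← this]
    exact Matrix.det_vandermonde_ne_zero_iff.mpr hmu
  have hdetM : IsUnit M.det := by
    rw [hfact, Matrix.det_mul, Matrix.det_transpose, Matrix.det_diagonal]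
    refine (Ne.isUnit hdetN).mul (Ne.isUnit ?_)
    exact Finset.prod_ne_zero_iff.mpr fun i _ => hd i
  have hMunit : IsUnit M := (Matrix.isUnit_iff_isUnit_det M).mpr hdetM
  refine ⟨hMunit, fun c => ?_⟩
  have : Invertible M := Matrix.invertibleOfIsUnitDet M hdetM
  obtain ⟨x, hx⟩ := Matrix.mulVec_surjective_of_invertible M c
  exact ⟨x, hx, fun y hy => Matrix.mulVec_injective_of_invertible M (hy.trans hx.symm)⟩
end

section
/- In the setup of Section 1.3 (symplectic case): with $g \in Sp(V)$ defined by $gx = \lambda_i x$ on $\mathcal{V}_i$ and $gx = \lambda_i^{-1} x$ on $\mathcal{V}'_i$, and with vectors $v_t = \sum_{i \le p_t} (v_{t,i} + v'_{t,i})$ where $(v_{t,i}, v'_{t',i}) = \delta_{t,t'} c_{t,i}$ and the $c_{t,i}$ solve $\sum_{i\in[1,p_t]} (\lambda_i^j - \lambda_i^{-j}) c_{t,i} = -\delta_{j,p_t}$ for $j \in [1,p_t]$: one has $(g^j v_t, v_{t'}) = \delta_{t,t'}\delta_{j,-p_t}$ for all $t,t' \in [1,\sigma]$ and all $j \in [-p_t,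 p_t - 1]$. -/
open Finset

lemma leq_mul_apply {K : Type*} [Field K] {V : Type*} [AddCommGroup V] [Module K V]
    (f g : V ≃ₗ[K] V) (x : V) : (f * g) x = f (g x) := rfl

lemma leq_one_apply {K : Type*} [Field K] {V : Type*} [AddCommGroup V] [Module K V]
    (x : V) : (1 : V ≃ₗ[K] V) x = x := rfl

lemma zpow_eig {K : Type*} [Field K] {V : Type*} [AddCommGroup V] [Module K V]
    (g : V ≃ₗ[K] V) (a : K) (ha : a ≠ 0) (x : V) (h : g x = a • x) :
    ∀ j : ℤ, (g ^ j) x = a ^ j • x := by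
  have hn : ∀ n : ℕ, (g ^ n) x = a ^ n • x := by
    intro n
    induction n with
    | zero => simp [leq_one_apply]
    | succ n ih =>
      rw [pow_succ, leq_mul_apply, h, map_smul, ih, smul_smul, pow_succ]
      ring_nf
  intro j
  obtain ⟨n, rfl | rfl⟩ := j.eq_nat_or_neg
  · simpa [zpow_natCast] using hn n
  · have h1 : (g ^ (-(n:ℤ)) * g ^ (n:ℤ)) x = x := by
      rw [← zpow_add, neg_add_cancel, zpow_zero, leq_one_apply]
    rw [leq_mul_apply, zpow_natCast, hn n, map_smul] at h1
    have h2 := congrArg (fun y => (a ^ n)⁻¹ • y) h1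
    simp only [smul_smul, inv_mul_cancel₀ (pow_ne_zero n ha), one_smul] at h2
    rw [h2, zpow_neg, zpow_natCast]

/-- setup of 1.3 and computation 1.5(a), symplectic case:
with `g` acting on the eigenvector `v_{t,i}` by `λᵢ` and on `v'_{t,i}` by `λᵢ⁻¹`,
with the alternating form vanishing on the spans of the `v`'s and of the `v'`'s,
with `B(v_{t,i}, v'_{t',i'}) = δ_{t,t'} δ_{i,i'} c_{t,i}`, and with the `c_{t,i}`
solving `∑_{i∈[1,pₜ]} (λᵢʲ - λᵢ⁻ʲ) c_{t,i} = -δ_{j,pₜ}` (`j ∈ [1,pₜ]`), the vectors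
`vₜ = ∑_{i≤pₜ} (v_{t,i} + v'_{t,i})` satisfy
`B(gʲ vₜ, vₜ') = δ_{t,t'} δ_{j,-pₜ}` for all `t,t'` and all `j ∈ [-pₜ, pₜ-1]`. -/
theorem stmt7 {K : Type*} [Field K] {V : Type*} [AddCommGroup V] [Module K V]
    (B : V →ₗ[K] V →ₗ[K] K) (halt : ∀ x, B x x = 0)
    (σ kk : ℕ) (p : Fin σ → ℕ) (hmono : Antitone p) (hp1 : ∀ t, 1 ≤ p t)
    (hpk : ∀ t, p t ≤ kk)
    (l : Fin kk → K) (hl0 : ∀ i, l i ≠ 0)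
    (hlne : ∀ i j, i ≠ j → l i ≠ l j) (hlinv : ∀ i j, l i ≠ (l j)⁻¹)
    (vv vv' : Fin σ → Fin kk → V) (c : Fin σ → Fin kk → K)
    (g : V ≃ₗ[K] V)
    (hgv : ∀ t (i : Fin kk), (i : ℕ) < p t → g (vv t i) = l i • vv t i)
    (hgv' : ∀ t (i : Fin kk), (i : ℕ) < p t → g (vv' t i) = (l i)⁻¹ • vv' t i)
    (hBvv : ∀ t t' (i i' : Fin kk), (i : ℕ) < p t → (i' : ℕ) < p t' →
      B (vv t i) (vv t' i') = 0)
    (hBvv' : ∀ t t' (i i' : Fin kk), (i : ℕ) < p t → (i' : ℕ) < p t' →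
      B (vv' t i) (vv' t' i') = 0)
    (hBcross : ∀ t t' (i i' : Fin kk), (i : ℕ) < p t → (i' : ℕ) < p t' →
      B (vv t i) (vv' t' i') = if t = t' ∧ i = i' then c t i else 0)
    (hc : ∀ t, ∀ j : ℕ, 1 ≤ j → j ≤ p t →
      ∑ i ∈ univ.filter (fun i : Fin kk => (i : ℕ) < p t),
        (l i ^ (j : ℤ) - l i ^ (-(j : ℤ))) * c t i = if j = p t then -1 else 0)
    (v : Fin σ → V)
    (hv : ∀ t, v t = ∑ i ∈ univ.filter (fun i : Fin kk => (i : ℕ) < p t),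
      (vv t i + vv' t i)) :
    ∀ t t' : Fin σ, ∀ j : ℤ, -(p t : ℤ) ≤ j → j ≤ (p t : ℤ) - 1 →
      B ((g ^ j) (v t)) (v t') = if t = t' ∧ j = -(p t : ℤ) then 1 else 0 := by

  intro t t' j hj1 hj2
  have hskew : ∀ x y : V, B y x = - B x y := by
    intro x y
    have h := halt (x + y)
    simp only [map_add, LinearMap.add_apply, halt] at h
    linear_combination h
  have hgvz : ∀ (i : Fin kk), (i:ℕ) < p t → (g ^ j) (vv t i) = l i ^ j • vv t i :=
    fun i hi => zpow_eig g (l i) (hl0 i) _ (hgv t i hi) j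
  have hgv'z : ∀ (i : Fin kk), (i:ℕ) < p t → (g ^ j) (vv' t i) = l i ^ (-j) • vv' t i := by
    intro i hi
    have h := zpow_eig g (l i)⁻¹ (inv_ne_zero (hl0 i)) _ (hgv' t i hi) j
    rw [h, inv_zpow, ← zpow_neg]
  have hgj : (g ^ j) (v t) = ∑ i ∈ univ.filter (fun i : Fin kk => (i:ℕ) < p t),
      (l i ^ j • vv t i + l i ^ (-j) • vv' t i) := by
    rw [hv, map_sum]
    refine Finset.sum_congr rfl fun i hi => ?_
    simp only [mem_filter, mem_univ, true_and] at hi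
    rw [map_add, hgvz i hi, hgv'z i hi]
  have step : ∀ i ∈ univ.filter (fun i : Fin kk => (i:ℕ) < p t),
      ∀ i' ∈ univ.filter (fun i : Fin kk => (i:ℕ) < p t'),
      B (l i ^ j • vv t i + l i ^ (-j) • vv' t i) (vv t' i' + vv' t' i') =
        if t = t' ∧ i = i' then (l i ^ j - l i ^ (-j)) * c t i else 0 := by
    intro i hi i' hi'
    simp only [mem_filter, mem_univ, true_and] at hi hi'
    have e1 := hBvv t t' i i' hi hi'
    have e2 := hBvv' t t' i i' hi hi'
    have e3 := hBcross t t' i i' hi hi'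
    have e4 : B (vv' t i) (vv t' i') = - (if t' = t ∧ i' = i then c t' i' else 0) := by
      rw [hskew, hBcross t' t i' i hi' hi]
    simp only [map_add, map_smul, LinearMap.add_apply, LinearMap.smul_apply, smul_eq_mul]
    rw [e1, e2, e3, e4]
    by_cases hcase : t = t' ∧ i = i'
    · obtain ⟨h1, h2⟩ := hcase
      subst h1; subst h2
      simp only [and_self, if_pos, if_true]
      ring
    · have hcase' : ¬ (t' = t ∧ i' = i) := fun ⟨a, b⟩ => hcase ⟨a.symm, b.symm⟩
      rw [if_neg hcase, if_neg hcase', if_neg hcase]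
      ring
  rw [hgj, hv t', map_sum B, LinearMap.sum_apply]
  have hsum : ∀ i ∈ univ.filter (fun i : Fin kk => (i:ℕ) < p t),
      B (l i ^ j • vv t i + l i ^ (-j) • vv' t i)
        (∑ i' ∈ univ.filter (fun i : Fin kk => (i:ℕ) < p t'), (vv t' i' + vv' t' i')) =
      ∑ i' ∈ univ.filter (fun i : Fin kk => (i:ℕ) < p t'),
        (if t = t' ∧ i = i' then (l i ^ j - l i ^ (-j)) * c t i else 0) := by
    intro i hi
    rw [map_sum]
    exact Finset.sum_congr rfl fun i' hi' => step i hi i' hi'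
  rw [Finset.sum_congr rfl hsum]
  by_cases htt : t = t'
  · subst htt
    simp only [true_and]
    have hinner : ∀ i ∈ univ.filter (fun i : Fin kk => (i:ℕ) < p t),
        (∑ i' ∈ univ.filter (fun i : Fin kk => (i:ℕ) < p t),
          (if i = i' then (l i ^ j - l i ^ (-j)) * c t i else 0)) =
        (l i ^ j - l i ^ (-j)) * c t i := by
      intro i hi
      rw [Finset.sum_ite_eq (univ.filter (fun i : Fin kk => (i:ℕ) < p t)) i
        (fun _ => (l i ^ j - l i ^ (-j)) * c t i), if_pos hi]
    rw [Finset.sum_congr rfl hinner]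
    -- now the key sum computation
    by_cases hj0 : 0 ≤ j
    · lift j to ℕ using hj0 with n
      rcases Nat.eq_zero_or_pos n with rfl | hn
      · rw [if_neg (by have := hp1 t; omega)]
        simp
      · have hle : n ≤ p t := by omega
        have hne : n ≠ p t := by omega
        rw [hc t n hn hle, if_neg hne, if_neg (by have := hp1 t; omega)]
    · obtain ⟨n, hnj⟩ : ∃ n : ℕ, j = -(n : ℤ) := ⟨(-j).toNat, by omega⟩
      have h1n : 1 ≤ n := by omega
      have hnp : n ≤ p t := by omega
      rw [hnj]
      have hflip : ∑ i ∈ univ.filter (fun i : Fin kk => (i:ℕ) < p t),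
          (l i ^ (-(n:ℤ)) - l i ^ (-(-(n:ℤ)))) * c t i =
          - ∑ i ∈ univ.filter (fun i : Fin kk => (i:ℕ) < p t),
          (l i ^ (n:ℤ) - l i ^ (-(n:ℤ))) * c t i := by
        rw [← Finset.sum_neg_distrib]
        exact Finset.sum_congr rfl fun i _ => by rw [neg_neg]; ring
      rw [hflip, hc t n h1n hnp]
      by_cases hnpt : n = p t
      · rw [if_pos hnpt, if_pos (by omega), neg_neg]
      · rw [if_neg hnpt, if_neg (by omega), neg_zero]
  · have hz : ∀ i ∈ univ.filter (fun i : Fin kk => (i:ℕ) < p t),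
        (∑ i' ∈ univ.filter (fun i : Fin kk => (i:ℕ) < p t'),
          (if t = t' ∧ i = i' then (l i ^ j - l i ^ (-j)) * c t i else 0)) = 0 := by
      intro i _
      exact Finset.sum_eq_zero fun i' _ => if_neg (fun h => htt h.1)
    rw [Finset.sum_congr rfl hz, Finset.sum_const_zero, if_neg (fun h => htt h.1)]
end

section
/- Let $p_1 \ge \dots \ge p_\sigma \ge 1$ sum to $n$, with $\kappa_\sigma$ the parity of $\sigma$. Define $\psi : [1,\sigma] \to \{-1,0,1\}$ by: $\psi(t) = 1$ if $t$ is odd and ($t = 1$ or $p_{t-1} > p_t$); $\psi(t) = -1$ if $t$ is even and ($t = \sigma$ or $p_t > p_{t+1}$); $\psi(t) = 0$ otherwise. Then $\sum_{t=1}^\sigma \psi(t) = \kappa_\sigma$, the sequence $2p_1 + \psi(1) \ge 2p_2 + \psi(2) \ge \dots \ge 2p_\sigma + \psi(\sigma)$ is weakly decreasing of total sum $2n + \kappa_\sigma$, and every even number occurs an even number of times among the $2p_t + \psi(t)$ (so this is a valid orthogonal Jordan type). -/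
/-- The map `ψ` of §3.4 (here `t` is 0-indexed: the paper's `t ∈ [1,σ]` is `t+1`):
`ψ(t) = 1` if `t` is odd (paper numbering) and `p_{t-1} > p_t` (with the convention
that this holds for `t = 1`); `ψ(t) = -1` if `t` is even and `p_t > p_{t+1}` (with the
convention that this holds for `t = σ`); `ψ(t) = 0` otherwise. -/
def psiFun (σ : ℕ) (p : ℕ → ℕ) : ℕ → ℤ := fun t =>
  if t % 2 = 0 ∧ (t = 0 ∨ p t < p (t - 1)) then 1
  else if t % 2 = 1 ∧ (t = σ - 1 ∨ p (t + 1) < p t) then -1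
  else 0

private lemma psi_even_eq (σ : ℕ) (p : ℕ → ℕ) {t : ℕ} (ht : t % 2 = 0) :
    psiFun σ p t = if t = 0 ∨ p t < p (t - 1) then 1 else 0 := by
  have h1 : ¬ t % 2 = 1 := by omega
  unfold psiFun
  by_cases h : t = 0 ∨ p t < p (t - 1) <;> simp [ht, h, h1]

private lemma psi_odd_eq (σ : ℕ) (p : ℕ → ℕ) {t : ℕ} (ht : t % 2 = 1) :
    psiFun σ p t = if t = σ - 1 ∨ p (t + 1) < p t then -1 else 0 := by
  have h1 : ¬ t % 2 = 0 := by omega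
  unfold psiFun
  by_cases h : t = σ - 1 ∨ p (t + 1) < p t <;> simp [ht, h, h1]

private lemma psi_vals (σ : ℕ) (p : ℕ → ℕ) (t : ℕ) :
    psiFun σ p t = 0 ∨ psiFun σ p t = 1 ∨ psiFun σ p t = -1 := by
  unfold psiFun; split_ifs <;> simp

private def chiFun (p : ℕ → ℕ) : ℕ → ℤ := fun t =>
  if t = 0 ∨ p t < p (t - 1) then 1 else 0

private def DFun (σ : ℕ) (p : ℕ → ℕ) : ℕ → ℤ := fun t =>
  if σ ≤ t then 1 else chiFun p t

private lemma pairLemma (σ : ℕ) (p : ℕ → ℕ) {t : ℕ} (ht : t % 2 = 0) (h2 : t + 2 ≤ σ) :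
    psiFun σ p t + psiFun σ p (t + 1) = DFun σ p t - DFun σ p (t + 2) := by
  have hL : psiFun σ p t = DFun σ p t := by
    rw [psi_even_eq σ p ht]
    simp only [DFun, chiFun]
    rw [if_neg (show ¬ σ ≤ t by omega)]
  have hR : psiFun σ p (t + 1) = - DFun σ p (t + 2) := by
    rw [psi_odd_eq σ p (show (t + 1) % 2 = 1 by omega)]
    by_cases hend : t + 2 = σ
    · have hc : t + 1 = σ - 1 ∨ p (t + 1 + 1) < p (t + 1) := Or.inl (by omega)
      rw [if_pos hc]
      simp only [DFun]
      rw [if_pos (by omega)]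
    · simp only [DFun, chiFun]
      rw [if_neg (show ¬ σ ≤ t + 2 by omega)]
      by_cases h : p (t + 2) < p (t + 1)
      · rw [if_pos (Or.inr (show p (t + 1 + 1) < p (t + 1) from h)),
          if_pos (Or.inr (show p (t + 2) < p (t + 2 - 1) from h))]
      · have hc1 : ¬ (t + 1 = σ - 1 ∨ p (t + 1 + 1) < p (t + 1)) := by
          push_neg
          exact ⟨by omega, Nat.le_of_not_lt h⟩
        have hc2 : ¬ (t + 2 = 0 ∨ p (t + 2) < p (t + 2 - 1)) := by
          push_neg
          exact ⟨by omega, Nat.le_of_not_lt h⟩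
        rw [if_neg hc1, if_neg hc2]
        simp
  rw [hL, hR]
  ring

private lemma teleLemma (σ : ℕ) (p : ℕ → ℕ) (k : ℕ) (hk : 2 * k ≤ σ) :
    ∑ t ∈ Finset.range (2 * k), psiFun σ p t = DFun σ p 0 - DFun σ p (2 * k) := by
  induction k with
  | zero => simp
  | succ k ih =>
    have hk' : 2 * k ≤ σ := by omega
    have hpair := pairLemma σ p (show (2 * k) % 2 = 0 by omega) (by omega)
    have e : 2 * (k + 1) = 2 * k + 1 + 1 := by ring
    rw [e, Finset.sum_range_succ, Finset.sum_range_succ, ih hk',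
      show 2 * k + 1 + 1 = 2 * k + 2 by omega]
    linarith

private lemma claim1Lemma (σ : ℕ) (p : ℕ → ℕ) :
    ∑ t ∈ Finset.range σ, psiFun σ p t = ((σ % 2 : ℕ) : ℤ) := by
  rcases Nat.even_or_odd σ with hev | hod
  · obtain ⟨m, hm⟩ := hev
    have hm' : σ = 2 * m := by omega
    subst hm'
    rcases Nat.eq_zero_or_pos m with rfl | hmpos
    · simp
    · rw [teleLemma (2 * m) p m le_rfl]
      have hD0 : DFun (2 * m) p 0 = 1 := by
        simp only [DFun, chiFun]
        rw [if_neg (by omega)]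
        simp
      have hDσ : DFun (2 * m) p (2 * m) = 1 := by
        simp only [DFun]
        rw [if_pos le_rfl]
      rw [hD0, hDσ]
      simp [Nat.mul_mod_right]
  · obtain ⟨m, hm⟩ := hod
    subst hm
    rw [Finset.sum_range_succ, teleLemma (2 * m + 1) p m (by omega)]
    have hD0 : DFun (2 * m + 1) p 0 = 1 := by
      simp only [DFun, chiFun]
      rw [if_neg (by omega)]
      simp
    have hψ2m : psiFun (2 * m + 1) p (2 * m) = DFun (2 * m + 1) p (2 * m) := by
      have hh : DFun (2 * m + 1) p (2 * m)
          = if 2 * m = 0 ∨ p (2 * m) < p (2 * m - 1) then 1 else 0 := by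
        simp only [DFun, chiFun]
        rw [if_neg (show ¬ (2 * m + 1 ≤ 2 * m) by omega)]
      rw [psi_even_eq _ p (show (2 * m) % 2 = 0 by omega), hh]
    rw [hD0, hψ2m]
    have h1 : (2 * m + 1) % 2 = 1 := by omega
    rw [h1]
    push_cast
    ring

/-- for a partition `p₁ ≥ … ≥ p_σ ≥ 1` of `n`, with `κ` the parity
of `σ`, one has `∑ ψ(t) = κ`; the sequence `2pₜ + ψ(t)` is weakly decreasing with
total sum `2n + κ`; and every even number occurs an even number of times among the
`2pₜ + ψ(t)` (i.e. it is a valid orthogonal Jordan type). -/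
theorem stmt19 (σ n κ : ℕ) (hκ : κ = σ % 2) (p : ℕ → ℕ)
    (hmono : ∀ s t, s ≤ t → t < σ → p t ≤ p s)
    (hp1 : ∀ t < σ, 1 ≤ p t)
    (hsum : ∑ t ∈ Finset.range σ, p t = n) :
    (∑ t ∈ Finset.range σ, psiFun σ p t = κ) ∧
    (∀ s t, s ≤ t → t < σ →
      2 * (p t : ℤ) + psiFun σ p t ≤ 2 * (p s : ℤ) + psiFun σ p s) ∧
    (∑ t ∈ Finset.range σ, (2 * (p t : ℤ) + psiFun σ p t) = 2 * n + κ) ∧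
    (∀ v : ℤ, Even v →
      Even ((Finset.range σ).filter
        (fun t => 2 * (p t : ℤ) + psiFun σ p t = v)).card) := by
  have claim1 : ∑ t ∈ Finset.range σ, psiFun σ p t = κ := by
    rw [hκ]
    exact claim1Lemma σ p
  refine ⟨claim1, ?_, ?_, ?_⟩
  · -- monotonicity
    have adj : ∀ t, t + 1 < σ →
        2 * (p (t + 1) : ℤ) + psiFun σ p (t + 1) ≤ 2 * (p t : ℤ) + psiFun σ p t := by
      intro t htσ
      have hple : p (t + 1) ≤ p t := hmono t (t + 1) (by omega) htσ
      rcases Nat.even_or_odd t with hev | hod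
      · have ht : t % 2 = 0 := Nat.even_iff.mp hev
        have h1 : 0 ≤ psiFun σ p t := by
          rw [psi_even_eq σ p ht]; split_ifs <;> norm_num
        have h2 : psiFun σ p (t + 1) ≤ 0 := by
          rw [psi_odd_eq σ p (show (t + 1) % 2 = 1 by omega)]; split_ifs <;> norm_num
        have : (p (t + 1) : ℤ) ≤ (p t : ℤ) := by exact_mod_cast hple
        linarith
      · have ht : t % 2 = 1 := Nat.odd_iff.mp hod
        by_cases hlt : p (t + 1) < p t
        · have h1 : -1 ≤ psiFun σ p t := by
            rw [psi_odd_eq σ p ht]; split_ifs <;> norm_num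
          have h2 : psiFun σ p (t + 1) ≤ 1 := by
            rw [psi_even_eq σ p (show (t + 1) % 2 = 0 by omega)]
            split_ifs <;> norm_num
          have : (p (t + 1) : ℤ) + 1 ≤ (p t : ℤ) := by exact_mod_cast hlt
          linarith
        · have hpe : p (t + 1) = p t := le_antisymm hple (by omega)
          have h1 : psiFun σ p t = 0 := by
            rw [psi_odd_eq σ p ht, if_neg]
            push_neg
            exact ⟨by omega, by omega⟩
          have h2 : psiFun σ p (t + 1) = 0 := by
            rw [psi_even_eq σ p (show (t + 1) % 2 = 0 by omega), if_neg]
            push_neg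
            refine ⟨by omega, ?_⟩
            simp only [Nat.add_sub_cancel]
            omega
          rw [h1, h2, hpe]
    intro s t hst htσ
    induction t with
    | zero =>
      have : s = 0 := by omega
      simp [this]
    | succ t ih =>
      rcases Nat.lt_or_ge s (t + 1) with h | h
      · exact le_trans (adj t htσ) (ih (by omega) (by omega))
      · have : s = t + 1 := by omega
        simp [this]
  · -- total sum
    have h1 : ∑ t ∈ Finset.range σ, (2 * (p t : ℤ) + psiFun σ p t)
        = 2 * (∑ t ∈ Finset.range σ, (p t : ℤ)) + ∑ t ∈ Finset.range σ, psiFun σ p t := by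
      rw [Finset.sum_add_distrib, Finset.mul_sum]
    rw [h1, claim1]
    have h2 : ∑ t ∈ Finset.range σ, (p t : ℤ) = (n : ℤ) := by
      rw [← hsum]; push_cast; ring
    rw [h2]
  · -- even multiplicities
    intro v hv
    set S := (Finset.range σ).filter (fun t => 2 * (p t : ℤ) + psiFun σ p t = v) with hS
    have memS : ∀ t ∈ S, t < σ ∧ psiFun σ p t = 0 ∧ 2 * (p t : ℤ) = v := by
      intro t htS
      rw [hS, Finset.mem_filter, Finset.mem_range] at htS
      obtain ⟨h1, h2⟩ := htS
      have h0 : psiFun σ p t = 0 := by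
        rcases psi_vals σ p t with h | h | h
        · exact h
        · exfalso; rw [h] at h2; obtain ⟨w, hw⟩ := hv; omega
        · exfalso; rw [h] at h2; obtain ⟨w, hw⟩ := hv; omega
      refine ⟨h1, h0, ?_⟩
      rw [h0] at h2
      linarith
    have zero_odd : ∀ t, t % 2 = 1 → t < σ → psiFun σ p t = 0 →
        t + 1 < σ ∧ psiFun σ p (t + 1) = 0 ∧ p (t + 1) = p t := by
      intro t ht htσ h0
      rw [psi_odd_eq σ p ht] at h0
      have hcond : ¬ (t = σ - 1 ∨ p (t + 1) < p t) := by
        intro h; rw [if_pos h] at h0; norm_num at h0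
      push_neg at hcond
      obtain ⟨hne, hnlt⟩ := hcond
      have h1 : t + 1 < σ := by omega
      have hpe : p (t + 1) = p t := le_antisymm (hmono t (t + 1) (by omega) h1) hnlt
      refine ⟨h1, ?_, hpe⟩
      rw [psi_even_eq σ p (show (t + 1) % 2 = 0 by omega), if_neg]
      push_neg
      refine ⟨by omega, ?_⟩
      simp only [Nat.add_sub_cancel]
      omega
    have zero_even : ∀ t, t % 2 = 0 → t < σ → psiFun σ p t = 0 →
        t ≠ 0 ∧ psiFun σ p (t - 1) = 0 ∧ p (t - 1) = p t := by
      intro t ht htσ h0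
      rw [psi_even_eq σ p ht] at h0
      have hcond : ¬ (t = 0 ∨ p t < p (t - 1)) := by
        intro h; rw [if_pos h] at h0; norm_num at h0
      push_neg at hcond
      obtain ⟨hne, hnlt⟩ := hcond
      have hpe : p (t - 1) = p t :=
        le_antisymm (by omega) (hmono (t - 1) t (by omega) htσ)
      refine ⟨hne, ?_, hpe⟩
      rw [psi_odd_eq σ p (show (t - 1) % 2 = 1 by omega), if_neg]
      push_neg
      refine ⟨by omega, ?_⟩
      rw [show t - 1 + 1 = t by omega]
      omega
    have hsplit : (S.filter (fun t => t % 2 = 1)).card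
        + (S.filter (fun t => ¬ t % 2 = 1)).card = S.card :=
      Finset.card_filter_add_card_filter_not _
    have hcard : (S.filter (fun t => t % 2 = 1)).card
        = (S.filter (fun t => ¬ t % 2 = 1)).card := by
      apply Finset.card_bij (fun t _ => t + 1)
      · intro a ha
        rw [Finset.mem_filter] at ha ⊢
        obtain ⟨haS, haodd⟩ := ha
        obtain ⟨haσ, haψ, hav⟩ := memS a haS
        obtain ⟨h1, h2, h3⟩ := zero_odd a haodd haσ haψ
        refine ⟨?_, by omega⟩
        rw [hS, Finset.mem_filter, Finset.mem_range]
        refine ⟨h1, ?_⟩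
        rw [h2, h3]
        linarith
      · intro a ha b hb hab
        omega
      · intro b hb
        rw [Finset.mem_filter] at hb
        obtain ⟨hbS, hbev⟩ := hb
        obtain ⟨hbσ, hbψ, hbv⟩ := memS b hbS
        obtain ⟨hne, h2, h3⟩ := zero_even b (by omega) hbσ hbψ
        refine ⟨b - 1, ?_, by omega⟩
        rw [Finset.mem_filter]
        constructor
        · rw [hS, Finset.mem_filter, Finset.mem_range]
          refine ⟨by omega, ?_⟩
          rw [h2, h3]
          linarith
        · omega
    rw [← hsplit, ← hcard]
    exact Even.add_self _
end
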